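/- Let j : Y → X be a continuous surjection of compact Hausdorff spaces and suppose K ⊆ Y is the unique minimal closed set with j(K) = X. Let g : Y → ℂ be continuous with g vanishing on K, let ε > 0, and let F ⊊ X be a proper closed subset. Then there exists a continuous function f : X → ℝ with 0 ≤ f ≤ 1, sup-norm ‖f‖ = 1, f vanishing on F, such that the continuous function (f ∘ j) · g · (f ∘ j) on Y has sup-norm strictly less than ε. -/

import Mathlib

/-!
Let `C ⊆ Y` be the closed set where `‖g‖ ≥ ε` or `j` lands in `F`. Every closed set with full
image contains a minimal one (Zorn, using compactness of the fibres of `j`), which by uniqueness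
is `K`. Since `g` vanishes on `K`, a full image of `C` would force `K ⊆ j⁻¹(F)` and hence
`F = X`; so `j(C)` is a proper closed subset of `X`, and an Urysohn function which vanishes on
`j(C)` and equals `1` at a point outside it does the job.
-/

open Set

lemma image_sInter_eq_univ_of_isChain {Y X : Type*} [TopologicalSpace Y] [CompactSpace Y]
    [TopologicalSpace X] [T1Space X] {j : Y → X} (hj : Continuous j) {c : Set (Set Y)}
    (hc : IsChain (· ⊆ ·) c) (hne : c.Nonempty) (hclosed : ∀ s ∈ c, IsClosed s)
    (hfull : ∀ s ∈ c, j '' s = univ) : j '' ⋂₀ c = univ := by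
  refine eq_univ_of_forall fun x => ?_
  have : Nonempty c := hne.to_subtype
  have hc_rev : IsChain (· ⊇ ·) c := hc.symm
  have hfibre_closed (s : c) : IsClosed ((s : Set Y) ∩ j ⁻¹' {x}) :=
    (hclosed s s.2).inter (isClosed_singleton.preimage hj)
  obtain ⟨y, hy⟩ := IsCompact.nonempty_iInter_of_directed_nonempty_isCompact_isClosed
    (fun s : c => (s : Set Y) ∩ j ⁻¹' {x})
    (hc_rev.directedOn.directed_val.mono_comp (· ⊇ ·) (g := (· ∩ j ⁻¹' {x}))
      fun _ _ h => inter_subset_inter_left _ h)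
    (fun s => by simp [← image_inter_nonempty_iff, hfull s s.2])
    (fun s => (hfibre_closed s).isCompact) hfibre_closed
  rw [mem_iInter] at hy
  exact ⟨y, mem_sInter.2 fun s hs => (hy ⟨s, hs⟩).1, (hy ⟨_, hne.some_mem⟩).2⟩

lemma exists_minimal_isClosed_image_eq_univ {Y X : Type*} [TopologicalSpace Y] [CompactSpace Y]
    [TopologicalSpace X] [T1Space X] {j : Y → X} (hj : Continuous j) {C : Set Y}
    (hC : IsClosed C) (hCfull : j '' C = univ) :
    ∃ L ⊆ C, Minimal (fun E => IsClosed E ∧ j '' E = univ) L :=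
  zorn_superset_nonempty {E | IsClosed E ∧ j '' E = univ} (fun c hcS hc hne => ⟨⋂₀ c,
    ⟨isClosed_sInter fun _ hs => (hcS hs).1,
      image_sInter_eq_univ_of_isChain hj hc hne (fun _ hs => (hcS hs).1) fun _ hs => (hcS hs).2⟩,
    fun _ => sInter_subset_of_mem⟩) C ⟨hC, hCfull⟩

lemma subset_of_isClosed_image_eq_univ {Y X : Type*} [TopologicalSpace Y] [CompactSpace Y]
    [TopologicalSpace X] [T1Space X] {j : Y → X} (hj : Continuous j) {K : Set Y}
    (hKuniq : ∀ L : Set Y, IsClosed L → j '' L = univ →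
      (∀ F ⊆ L, IsClosed F → j '' F = univ → F = L) → L = K)
    {C : Set Y} (hC : IsClosed C) (hCfull : j '' C = univ) : K ⊆ C := by
  obtain ⟨L, hLC, hL⟩ := exists_minimal_isClosed_image_eq_univ hj hC hCfull
  rwa [← hKuniq L hL.prop.1 hL.prop.2 fun E hEL hEc hEfull => hL.eq_of_subset ⟨hEc, hEfull⟩ hEL]

lemma exists_continuous_nonneg_le_one_norm_eq_one_of_ne_univ {X : Type*} [TopologicalSpace X]
    [CompactSpace X] [T2Space X] {A : Set X} (hA : IsClosed A) (hA_ne : A ≠ univ) :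
    ∃ f : C(X, ℝ), (∀ x, 0 ≤ f x) ∧ (∀ x, f x ≤ 1) ∧ ‖f‖ = 1 ∧ ∀ x ∈ A, f x = 0 := by
  obtain ⟨x₀, hx₀⟩ := (ne_univ_iff_exists_notMem A).1 hA_ne
  obtain ⟨f, hfA, hfx₀, hf01⟩ := exists_continuous_zero_one_of_isClosed hA isClosed_singleton
    (disjoint_singleton_right.2 hx₀)
  refine ⟨f, fun x => (hf01 x).1, fun x => (hf01 x).2, le_antisymm ?_ ?_, hfA⟩
  · exact (ContinuousMap.norm_le _ zero_le_one).2 fun x =>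
      abs_le.2 ⟨by linarith [(hf01 x).1], (hf01 x).2⟩
  · simpa [hfx₀ rfl] using f.norm_coe_le_norm x₀

lemma norm_mul_mul_le_of_norm_le_one {R : Type*} [SeminormedRing R] {a : R} (ha : ‖a‖ ≤ 1)
    (b : R) : ‖a * b * a‖ ≤ ‖b‖ :=
  calc ‖a * b * a‖ ≤ ‖a‖ * ‖b‖ * ‖a‖ := norm_mul₃_le
    _ ≤ 1 * ‖b‖ * 1 := by gcongr
    _ = ‖b‖ := by ring

/-- If `K` is the unique minimal closed subset of `Y` with `j(K) = X`, `g : Y → ℂ` is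
continuous and vanishes on `K`, `ε > 0`, and `F ⊊ X` is a proper closed subset, then
there is a continuous `f : X → [0,1]` of sup-norm `1` vanishing on `F` such that
`(f ∘ j) · g · (f ∘ j)` has sup-norm less than `ε`. -/
theorem exists_cutoff_compressing_vanishing_function {Y X : Type*}
    [TopologicalSpace Y] [CompactSpace Y]
    [TopologicalSpace X] [CompactSpace X] [T2Space X]
    (j : Y → X) (hj : Continuous j) (hjs : Function.Surjective j)
    (K : Set Y) (hKfull : j '' K = Set.univ)
    (hKuniq : ∀ L : Set Y, IsClosed L → j '' L = Set.univ →
      (∀ F ⊆ L, IsClosed F → j '' F = Set.univ → F = L) → L = K)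
    (g : C(Y, ℂ)) (hg : ∀ y ∈ K, g y = 0)
    (ε : ℝ) (hε : 0 < ε) (F : Set X) (hF : IsClosed F) (hFp : F ⊂ Set.univ) :
    ∃ f : C(X, ℝ), (∀ x, 0 ≤ f x) ∧ (∀ x, f x ≤ 1) ∧ ‖f‖ = 1 ∧
      (∀ x ∈ F, f x = 0) ∧
      ‖(⟨fun y => (f (j y) : ℂ) * g y * (f (j y) : ℂ), by fun_prop⟩ : C(Y, ℂ))‖ < ε := by
  set C : Set Y := {y | ε ≤ ‖g y‖} ∪ j ⁻¹' F
  have hC : IsClosed C := (isClosed_le continuous_const (by fun_prop)).union (hF.preimage hj)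
  have hjC : j '' C ≠ univ := fun hCfull => by
    have hKC := subset_of_isClosed_image_eq_univ hj hKuniq hC hCfull
    refine hFp.ne (eq_univ_of_univ_subset (hKfull ▸ image_subset_iff.2 fun y hy => ?_))
    exact (hKC hy).resolve_left (by simp [hg y hy, hε])
  obtain ⟨f, hf0, hf1, hf_norm, hfC⟩ :=
    exists_continuous_nonneg_le_one_norm_eq_one_of_ne_univ (hC.isCompact.image hj).isClosed hjC
  refine ⟨f, hf0, hf1, hf_norm, fun x hx => hfC _ ?_, (ContinuousMap.norm_lt_iff _ hε).2 fun y => ?_⟩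
  · obtain ⟨y, rfl⟩ := hjs x
    exact mem_image_of_mem j (Or.inr hx)
  · by_cases hy : ε ≤ ‖g y‖
    · simp [hfC _ (mem_image_of_mem j (Or.inl hy)), hε]
    · have hf_le : ‖(f (j y) : ℂ)‖ ≤ 1 := by
        rw [Complex.norm_of_nonneg (hf0 _)]
        exact hf1 _
      exact (norm_mul_mul_le_of_norm_le_one hf_le _).trans_lt (not_le.1 hy)
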